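/- arXiv:2004.10048 — 3 statements merged into one kernel-verified Lean document; each statement's English description precedes it below -/
import Mathlib

section
/- Let G' be a finite simple graph with a distinguished vertex v' and a set S of Steiner vertices not containing v', and let T' be a spanning tree of G' satisfying the degree-one condition. Let C be a cycle in G' of length |C| ≥ 4 passing through v' whose two edges incident to v' are {v', s_i} and {v', s_j} for distinct Steiner vertices s_i, s_j ∈ S, such that {s_i, s_j} is an edge of G' not belonging to C. Then the number of edges of C that belong to T' is at most |C| − 2 − [the edge {s_i, s_j} belongs to T'], where the bracket is 1 if {s_i, s_j} is an edge of T' and 0 otherwise. (This is the validity of constraint (10), Proposition 1.) -/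
/-!
Write the cycle as `v' a ⋯ b v'`, so that `{a, b} = {s_i, s_j}`. If `{v', a}` is a tree edge, then
`a` has tree degree one, so the other cycle edge at `a` is not a tree edge; the same holds at `b`,
so at least two edges of the cycle lie outside `T`. If moreover `{a, b}` is a tree edge, then
neither `a` nor `b` is tree-adjacent to `v'` (it would have degree at least two), and since
`{a, b}` is a bridge of the tree, the part `a ⋯ b` of the cycle, which avoids `{a, b}`, must also
leave `T`: this gives a third edge outside `T`.
-/

open SimpleGraph

theorem Sym2.mk_eq_mk_of_ne {α : Type*} {a b x y : α} (hab : a ≠ b) (ha : a = x ∨ a = y)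
    (hb : b = x ∨ b = y) : s(a, b) = s(x, y) := by
  rcases ha with rfl | rfl <;> rcases hb with rfl | rfl
  exacts [absurd rfl hab, rfl, Sym2.eq_swap, absurd rfl hab]

theorem List.length_filter_pair_le_one {α : Type*} {p : α → Bool} {x y : α}
    (h : ¬(p x ∧ p y)) : ([x, y].filter p).length ≤ 1 := by
  cases hx : p x <;> cases hy : p y <;> simp_all

namespace SimpleGraph

variable {V : Type*} {G T : SimpleGraph V}

theorem eq_of_adj_of_adj_of_degree_eq_one {v x y : V} [Fintype (T.neighborSet v)]
    (h : T.degree v = 1) (hx : T.Adj v x) (hy : T.Adj v y) : x = y := by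
  obtain ⟨w, -, hw⟩ := degree_eq_one_iff_existsUnique_adj.mp h
  exact (hw x hx).trans (hw y hy).symm

theorem IsAcyclic.exists_mem_edges_notMem_edgeSet (hT : T.IsAcyclic) {a b : V}
    (hab : T.Adj a b) (p : G.Walk a b) (hp : s(a, b) ∉ p.edges) :
    ∃ e ∈ p.edges, e ∉ T.edgeSet := by
  by_contra! h
  have hbridge :=
    isBridge_iff_forall_walk_mem_edges.mp (isAcyclic_iff_forall_adj_isBridge.mp hT hab)
  exact hp (by simpa using hbridge (p.transfer T h))

namespace Walk

theorem two_le_length_of_ne_of_notMem_edges {a b : V} (p : G.Walk a b) (hab : a ≠ b)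
    (hp : s(a, b) ∉ p.edges) : 2 ≤ p.length := by
  match p with
  | nil => exact absurd rfl hab
  | cons _ nil => simp at hp
  | cons _ (cons _ _) => simp

theorem exists_edges_eq_cons_append {u w : V} (p : G.Walk u w) (hp : 2 ≤ p.length) :
    ∃ (x y : V) (r : G.Walk x y), p.support = u :: (r.support ++ [w]) ∧
      p.edges = s(u, x) :: (r.edges ++ [s(y, w)]) := by
  cases p with
  | nil => simp at hp
  | cons h p =>
    have hne : ¬ p.Nil := by rw [← length_eq_zero_iff]; simp at hp; omega
    obtain ⟨y, r, hy, rfl⟩ : ∃ y, ∃ (r : G.Walk _ y) (hy : G.Adj y w), p = r.concat hy :=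
      ⟨_, _, _, (p.concat_dropLast (p.adj_penultimate hne)).symm⟩
    exact ⟨_, _, r, by simp [support_concat], by simp [edges_concat]⟩

theorem IsCycle.exists_edges_eq_cons_append {u : V} {c : G.Walk u u} (hc : c.IsCycle) :
    ∃ (a b : V) (q : G.Walk a b), a ≠ b ∧ u ∉ q.support ∧
      c.edges = s(u, a) :: (q.edges ++ [s(b, u)]) := by
  obtain ⟨a, b, q, hsupp, hedges⟩ := c.exists_edges_eq_cons_append (by
    have := hc.three_le_length; omega)
  obtain ⟨hqnd, hu⟩ : q.support.Nodup ∧ u ∉ q.support := by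
    have := hc.support_nodup
    rw [hsupp, List.tail_cons, ← List.concat_eq_append, List.nodup_concat] at this
    exact this.symm
  refine ⟨a, b, q, ?_, hu, hedges⟩
  rintro rfl
  have hlen : c.length = q.length + 2 := by simp [← length_edges, hedges]
  have := length_eq_zero_iff.mpr (isPath_iff_nil.mp (IsPath.mk' hqnd))
  have := hc.three_le_length
  omega

end Walk

section DegreeOneCondition

variable [Fintype V] [DecidableRel T.Adj] {v : V} {S : Set V}

theorem not_adj_and_adj_of_degree_eq_one (hdeg : ∀ s ∈ S, T.Adj v s → T.degree s = 1)
    {s x : V} (hs : s ∈ S) (hx : x ≠ v) : ¬(T.Adj v s ∧ T.Adj s x) :=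
  fun ⟨hvs, hsx⟩ => hx (eq_of_adj_of_adj_of_degree_eq_one (hdeg s hs hvs) hsx hvs.symm)

theorem length_filter_cycle_edges_le (hdeg : ∀ s ∈ S, T.Adj v s → T.degree s = 1)
    {a b : V} (ha : a ∈ S) (hb : b ∈ S) (q : G.Walk a b) (hq : 2 ≤ q.length)
    (hv : v ∉ q.support) :
    ((s(v, a) :: (q.edges ++ [s(b, v)])).filter (· ∈ T.edgeSet)).length ≤ q.length := by
  obtain ⟨x, y, r, hsupp, hedges⟩ := q.exists_edges_eq_cons_append hq
  have hx : x ≠ v := fun h => hv (by simp [hsupp, ← h])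
  have hy : y ≠ v := fun h => hv (by simp [hsupp, ← h])
  have hfirst := List.length_filter_pair_le_one (p := (· ∈ T.edgeSet))
    (x := s(v, a)) (y := s(a, x)) (by simpa using not_adj_and_adj_of_degree_eq_one hdeg ha hx)
  have hlast := List.length_filter_pair_le_one (p := (· ∈ T.edgeSet))
    (x := s(y, b)) (y := s(b, v)) (by
      simp only [decide_eq_true_eq, mem_edgeSet]
      exact fun ⟨hyb, hbv⟩ =>
        not_adj_and_adj_of_degree_eq_one hdeg hb hy ⟨hbv.symm, hyb.symm⟩)
  have hmid := r.edges.length_filter_le (· ∈ T.edgeSet)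
  have hlen : q.length = r.length + 2 := by simp [← Walk.length_edges, hedges]
  rw [hedges, show s(v, a) :: (s(a, x) :: (r.edges ++ [s(y, b)]) ++ [s(b, v)]) =
    [s(v, a), s(a, x)] ++ r.edges ++ [s(y, b), s(b, v)] by simp]
  simp only [List.filter_append, List.length_append, Walk.length_edges] at hmid ⊢
  omega

theorem length_filter_cycle_edges_lt_of_adj (hT : T.IsAcyclic)
    (hdeg : ∀ s ∈ S, T.Adj v s → T.degree s = 1)
    {a b : V} (ha : a ∈ S) (hb : b ∈ S) (hab : T.Adj a b) (q : G.Walk a b)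
    (hv : v ∉ q.support) (hq : s(a, b) ∉ q.edges) :
    ((s(v, a) :: (q.edges ++ [s(b, v)])).filter (· ∈ T.edgeSet)).length < q.length := by
  have hva : ¬T.Adj v a := fun h =>
    not_adj_and_adj_of_degree_eq_one hdeg ha (fun hb => hv (hb ▸ q.end_mem_support)) ⟨h, hab⟩
  have hvb : ¬T.Adj b v := fun h =>
    not_adj_and_adj_of_degree_eq_one hdeg hb (fun ha => hv (ha ▸ q.start_mem_support))
      ⟨h.symm, hab.symm⟩
  obtain ⟨e, he, heT⟩ := hT.exists_mem_edges_notMem_edgeSet hab q hq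
  have hlt : (q.edges.filter (· ∈ T.edgeSet)).length < q.edges.length :=
    List.length_filter_lt_length_iff_exists.mpr ⟨e, he, by simpa using heT⟩
  simp only [List.filter_cons, List.filter_append, List.filter_nil, List.append_nil, mem_edgeSet,
    hva, hvb, decide_false, Bool.false_eq_true, if_false, Walk.length_edges] at hlt ⊢
  omega

theorem length_filter_cycle_edges_add_le (hT : T.IsAcyclic)
    (hdeg : ∀ s ∈ S, T.Adj v s → T.degree s = 1)
    {a b : V} (ha : a ∈ S) (hb : b ∈ S) (hab : a ≠ b) (q : G.Walk a b)
    (hv : v ∉ q.support) (hq : s(a, b) ∉ q.edges) :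
    ((s(v, a) :: (q.edges ++ [s(b, v)])).filter (· ∈ T.edgeSet)).length + 2 +
      (if T.Adj a b then 1 else 0) ≤ q.length + 2 := by
  split_ifs with hadj
  · have := length_filter_cycle_edges_lt_of_adj hT hdeg ha hb hadj q hv hq
    omega
  · have := length_filter_cycle_edges_le hdeg ha hb q
      (q.two_le_length_of_ne_of_notMem_edges hab hq) hv
    omega

end DegreeOneCondition

end SimpleGraph

theorem constraint_ten_valid_general {V : Type*} [Fintype V]
    (G T : SimpleGraph V) [DecidableRel T.Adj]
    (v' : V) (S : Set V) (hT : T.IsTree)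
    (hdeg : ∀ s ∈ S, T.Adj v' s → T.degree s = 1)
    (s_i s_j : V) (hsi : s_i ∈ S) (hsj : s_j ∈ S)
    (c : G.Walk v' v') (hc : c.IsCycle)
    (honly : ∀ e ∈ c.edges, v' ∈ e → e = s(v', s_i) ∨ e = s(v', s_j))
    (hnotC : s(s_i, s_j) ∉ c.edges) :
    (c.edges.filter (fun e => e ∈ T.edgeSet)).length ≤
      c.length - 2 - (if T.Adj s_i s_j then 1 else 0) := by
  obtain ⟨a, b, q, hab, hv, hedges⟩ := hc.exists_edges_eq_cons_append
  have hend : ∀ x, s(v', x) ∈ c.edges → x = s_i ∨ x = s_j := fun x hx =>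
    (honly _ hx (Sym2.mem_mk_left _ _)).imp Sym2.congr_right.mp Sym2.congr_right.mp
  have ha := hend a (by simp [hedges])
  have hb := hend b (by simp [hedges, Sym2.eq_swap])
  have hsym : s(a, b) = s(s_i, s_j) := Sym2.mk_eq_mk_of_ne hab ha hb
  have hmem : ∀ x, x = s_i ∨ x = s_j → x ∈ S := by rintro x (rfl | rfl) <;> assumption
  have hq : s(a, b) ∉ q.edges := fun h => hnotC (by simp [hedges, ← hsym, h])
  have hadj : T.Adj a b ↔ T.Adj s_i s_j := by rw [← mem_edgeSet, hsym, mem_edgeSet]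
  have hcount := length_filter_cycle_edges_add_le hT.isAcyclic hdeg (hmem a ha) (hmem b hb) hab
    q hv hq
  have hlen : c.length = q.length + 2 := by simp [← Walk.length_edges, hedges]
  rw [hedges, hlen, ← if_congr hadj rfl rfl]
  omega

/-- **Proposition 1, validity of constraint (10).**
Let `G` be a finite simple graph with a distinguished vertex `v'` and a set `S`
of Steiner vertices not containing `v'`, and let `T` be a spanning tree of `G`
satisfying the degree-one condition (every Steiner vertex adjacent to `v'` in
`T` has degree exactly one in `T`).  Let `c` be a cycle of length `≥ 4` through
`v'` whose two edges incident to `v'` are `{v', sᵢ}` and `{v', sⱼ}` with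
`sᵢ, sⱼ ∈ S` distinct, and suppose `{sᵢ, sⱼ}` is an edge of `G` not belonging
to `c`.  Then the number of edges of `c` belonging to `T` is at most
`|c| - 2 - [{sᵢ, sⱼ} ∈ T]`. -/
theorem constraint_ten_valid {V : Type*} [Fintype V]
    (G T : SimpleGraph V) [DecidableRel T.Adj]
    (v' : V) (S : Set V) (hv'S : v' ∉ S)
    (hTG : T ≤ G) (hT : T.IsTree)
    (hdeg : ∀ s ∈ S, T.Adj v' s → T.degree s = 1)
    (s_i s_j : V) (hsi : s_i ∈ S) (hsj : s_j ∈ S) (hij : s_i ≠ s_j)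
    (c : G.Walk v' v') (hc : c.IsCycle) (hlen : 4 ≤ c.length)
    (hei : s(v', s_i) ∈ c.edges) (hej : s(v', s_j) ∈ c.edges)
    (honly : ∀ e ∈ c.edges, v' ∈ e → e = s(v', s_i) ∨ e = s(v', s_j))
    (hGij : G.Adj s_i s_j) (hnotC : s(s_i, s_j) ∉ c.edges) :
    (c.edges.filter (fun e => e ∈ T.edgeSet)).length ≤
      c.length - 2 - (if T.Adj s_i s_j then 1 else 0) :=
  constraint_ten_valid_general G T v' S hT hdeg s_i s_j hsi hsj c hc honly hnotC
end

section
/- Let G' be a finite simple graph with a distinguished vertex v' and a set S of Steiner vertices not containing v', and let T' be a spanning tree of G' satisfying the degree-one condition. Let C be a cycle in G' of length |C| ≥ 4 passing through v' whose two edges incident to v' are {v', s_i} and {v', s_j} for distinct Steiner vertices s_i, s_j ∈ S. Then the number of edges of C that belong to T' is at most |C| − 2. -/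
/-!
At each Steiner neighbour `s` of `v'` on the cycle, one of the two cycle edges at `s` is missing
from the tree: either `{v', s}` itself, or, if `{v', s}` is a tree edge, the other cycle edge at
`s`, because the degree-one condition leaves `s` no second tree neighbour. The missing edges found
at `s_i` and at `s_j` differ, since a cycle edge `{s_i, s_j}` would close the triangle
`v' s_i s_j`, which is impossible on a cycle of length at least four.
-/

open SimpleGraph

theorem List.length_filter_add_two_le {α : Type*} {l : List α} (p : α → Bool) {a b : α}
    (hab : a ≠ b) (ha : a ∈ l) (hb : b ∈ l) (hpa : p a = false) (hpb : p b = false) :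
    (l.filter p).length + 2 ≤ l.length := by
  have hsub : [a, b] ⊆ l.filter (fun x => !p x) := by simp [ha, hb, hpa, hpb]
  have h2 : [a, b].length ≤ (l.filter (fun x => !p x)).length :=
    (List.subperm_of_subset (by simpa using hab) hsub).length_le
  have hsplit := l.length_eq_length_filter_add p
  simp only [List.length_cons, List.length_nil] at h2
  omega

namespace SimpleGraph

variable {V : Type*} {G : SimpleGraph V}

theorem eq_of_adj_of_degree_eq_one {v a b : V} [Fintype (G.neighborSet v)] (h : G.degree v = 1)
    (ha : G.Adj v a) (hb : G.Adj v b) : a = b := by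
  obtain ⟨w, -, hw⟩ := degree_eq_one_iff_existsUnique_adj.mp h
  exact (hw a ha).trans (hw b hb).symm

namespace Walk.IsCycle

variable {u : V} {c : G.Walk u u}

theorem exists_adj_toSubgraph_ne (hc : c.IsCycle) {w x : V} (hwx : c.toSubgraph.Adj w x) :
    ∃ y, c.toSubgraph.Adj w y ∧ y ≠ x := by
  have htwo := hc.ncard_neighborSet_toSubgraph_eq_two (mem_support_of_adj_toSubgraph hwx)
  exact Set.exists_ne_of_one_lt_ncard (htwo ▸ one_lt_two) x

theorem length_eq_three_of_toSubgraph_adj_snd_penultimate (hc : c.IsCycle)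
    (h : c.toSubgraph.Adj c.snd c.penultimate) : c.length = 3 := by
  have hlen := hc.three_le_length
  -- The cycle neighbours of `c.snd = c.getVert 1` are `u` and `c.getVert 2`.
  have hpen : c.penultimate ∈ c.toSubgraph.neighborSet (c.getVert 1) := h
  rw [hc.neighborSet_toSubgraph_internal one_ne_zero (by omega)] at hpen
  rcases hpen with hpen | hpen
  · exact absurd (by simpa using hpen) (c.toSubgraph_adj_penultimate hc.not_nil).ne
  · have htwo := hc.getVert_injOn ⟨by omega, by omega⟩ ⟨by omega, by omega⟩ hpen
    omega

theorem length_eq_three_of_toSubgraph_adj (hc : c.IsCycle) {a b : V}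
    (ha : c.toSubgraph.Adj u a) (hb : c.toSubgraph.Adj u b) (hab : c.toSubgraph.Adj a b) :
    c.length = 3 := by
  have ha' : a ∈ c.toSubgraph.neighborSet u := ha
  have hb' : b ∈ c.toSubgraph.neighborSet u := hb
  rw [hc.neighborSet_toSubgraph_endpoint] at ha' hb'
  rcases ha' with rfl | rfl <;> rcases hb' with rfl | rfl
  · exact absurd rfl hab.ne
  · exact hc.length_eq_three_of_toSubgraph_adj_snd_penultimate hab
  · exact hc.length_eq_three_of_toSubgraph_adj_snd_penultimate hab.symm
  · exact absurd rfl hab.ne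

theorem exists_mem_edges_notMem_edgeSet_of_degree_eq_one (hc : c.IsCycle)
    {T : SimpleGraph V} {v s : V} [Fintype (T.neighborSet s)] (hvs : c.toSubgraph.Adj v s)
    (hdeg : T.Adj v s → T.degree s = 1) :
    ∃ e ∈ c.edges, s ∈ e ∧ e ∉ T.edgeSet := by
  by_cases hT : T.Adj v s
  · obtain ⟨x, hsx, hxv⟩ := hc.exists_adj_toSubgraph_ne hvs.symm
    refine ⟨s(s, x), adj_toSubgraph_iff_mem_edges.mp hsx, Sym2.mem_mk_left s x, fun hTx => ?_⟩
    exact hxv (eq_of_adj_of_degree_eq_one (hdeg hT) hTx hT.symm)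
  · exact ⟨s(v, s), adj_toSubgraph_iff_mem_edges.mp hvs, Sym2.mem_mk_right v s, hT⟩

end Walk.IsCycle

end SimpleGraph

theorem cycle_edges_in_tree_le_sub_two_general {V : Type*} [Fintype V]
    (G T : SimpleGraph V) [DecidableRel T.Adj]
    (v' : V) (S : Set V)
    (hdeg : ∀ s ∈ S, T.Adj v' s → T.degree s = 1)
    (s_i s_j : V) (hsi : s_i ∈ S) (hsj : s_j ∈ S) (hij : s_i ≠ s_j)
    (c : G.Walk v' v') (hc : c.IsCycle) (hlen : 4 ≤ c.length)
    (hei : s(v', s_i) ∈ c.edges) (hej : s(v', s_j) ∈ c.edges) :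
    (c.edges.filter (fun e => e ∈ T.edgeSet)).length ≤ c.length - 2 := by
  have hvi : c.toSubgraph.Adj v' s_i := Walk.adj_toSubgraph_iff_mem_edges.mpr hei
  have hvj : c.toSubgraph.Adj v' s_j := Walk.adj_toSubgraph_iff_mem_edges.mpr hej
  obtain ⟨e_i, hei_c, hsi_e, hei_T⟩ :=
    hc.exists_mem_edges_notMem_edgeSet_of_degree_eq_one hvi (hdeg s_i hsi)
  obtain ⟨e_j, hej_c, hsj_e, hej_T⟩ :=
    hc.exists_mem_edges_notMem_edgeSet_of_degree_eq_one hvj (hdeg s_j hsj)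
  have hne : e_i ≠ e_j := by
    rintro rfl
    rw [Sym2.mem_and_mem_iff hij |>.mp ⟨hsi_e, hsj_e⟩] at hei_c
    have htriangle := hc.length_eq_three_of_toSubgraph_adj hvi hvj
      (Walk.adj_toSubgraph_iff_mem_edges.mpr hei_c)
    omega
  have hcount := List.length_filter_add_two_le (fun e => decide (e ∈ T.edgeSet)) hne hei_c hej_c
    (by simpa using hei_T) (by simpa using hej_T)
  rw [Walk.length_edges] at hcount
  omega

/-- **second step of the proof of Proposition 1.**
Let `G` be a finite simple graph with a distinguished vertex `v'` and a set `S`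
of Steiner vertices not containing `v'`, and let `T` be a spanning tree of `G`
satisfying the degree-one condition.  Let `c` be a cycle of length `≥ 4`
through `v'` whose two edges incident to `v'` are `{v', sᵢ}` and `{v', sⱼ}`
with `sᵢ, sⱼ ∈ S` distinct.  Then the number of edges of `c` belonging to `T`
is at most `|c| - 2`. -/
theorem cycle_edges_in_tree_le_sub_two {V : Type*} [Fintype V]
    (G T : SimpleGraph V) [DecidableRel T.Adj]
    (v' : V) (S : Set V) (hv'S : v' ∉ S)
    (hTG : T ≤ G) (hT : T.IsTree)
    (hdeg : ∀ s ∈ S, T.Adj v' s → T.degree s = 1)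
    (s_i s_j : V) (hsi : s_i ∈ S) (hsj : s_j ∈ S) (hij : s_i ≠ s_j)
    (c : G.Walk v' v') (hc : c.IsCycle) (hlen : 4 ≤ c.length)
    (hei : s(v', s_i) ∈ c.edges) (hej : s(v', s_j) ∈ c.edges)
    (honly : ∀ e ∈ c.edges, v' ∈ e → e = s(v', s_i) ∨ e = s(v', s_j)) :
    (c.edges.filter (fun e => e ∈ T.edgeSet)).length ≤ c.length - 2 :=
  cycle_edges_in_tree_le_sub_two_general G T v' S hdeg s_i s_j hsi hsj hij c hc hlen hei hej
end

section
/- Let G' be a finite simple graph with a distinguished vertex v' and a set S of Steiner vertices not containing v', and let T' be a spanning tree of G' satisfying the degree-one condition. Let s_i, s_j ∈ S be distinct Steiner vertices such that v', s_i, s_j form a triangle in G' (all three pairwise edges {v', s_i}, {v', s_j}, {s_i, s_j} are edges of G'). If the edge {s_i, s_j} belongs to T', then neither {v', s_i} nor {v', s_j} belongs to T'. (This is the validity of the triangle constraint (11).) -/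
open SimpleGraph

theorem SimpleGraph.eq_of_adj_of_degree_eq_one_s4 {V : Type*} {G : SimpleGraph V} {v a b : V}
    [Fintype (G.neighborSet v)] (hv : G.degree v = 1) (ha : G.Adj v a) (hb : G.Adj v b) :
    a = b :=
  (degree_eq_one_iff_existsUnique_adj.1 hv).unique ha hb

/-- Were `{v', s}` an edge of `T`, the degree-one condition would make `v'` the only `T`-neighbour
of `s`, yet `t ≠ v'` because `v' ∉ S`. -/
theorem not_adj_of_adj_steiner {V : Type*} [Fintype V] {T : SimpleGraph V} [DecidableRel T.Adj]
    {v' : V} {S : Set V} (hv'S : v' ∉ S) (hdeg : ∀ s ∈ S, T.Adj v' s → T.degree s = 1)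
    {s t : V} (hs : s ∈ S) (ht : t ∈ S) (hst : T.Adj s t) : ¬ T.Adj v' s := fun hv's =>
  hv'S <| eq_of_adj_of_degree_eq_one_s4 (hdeg s hs hv's) hv's.symm hst ▸ ht

theorem triangle_constraint_valid_general {V : Type*} [Fintype V]
    (T : SimpleGraph V) [DecidableRel T.Adj]
    (v' : V) (S : Set V) (hv'S : v' ∉ S)
    (hdeg : ∀ s ∈ S, T.Adj v' s → T.degree s = 1)
    (s_i s_j : V) (hsi : s_i ∈ S) (hsj : s_j ∈ S)
    (hTij : T.Adj s_i s_j) :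
    ¬ T.Adj v' s_i ∧ ¬ T.Adj v' s_j :=
  ⟨not_adj_of_adj_steiner hv'S hdeg hsi hsj hTij,
    not_adj_of_adj_steiner hv'S hdeg hsj hsi hTij.symm⟩

/-- **validity of the triangle constraint (11).**
Let `G` be a finite simple graph with a distinguished vertex `v'` and a set `S`
of Steiner vertices not containing `v'`, and let `T` be a spanning tree of `G`
satisfying the degree-one condition.  Let `sᵢ, sⱼ ∈ S` be distinct Steiner
vertices such that `v'`, `sᵢ`, `sⱼ` form a triangle in `G`.  If the edge
`{sᵢ, sⱼ}` belongs to `T`, then neither `{v', sᵢ}` nor `{v', sⱼ}` belongs to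
`T`. -/
theorem triangle_constraint_valid {V : Type*} [Fintype V]
    (G T : SimpleGraph V) [DecidableRel T.Adj]
    (v' : V) (S : Set V) (hv'S : v' ∉ S)
    (hTG : T ≤ G) (hT : T.IsTree)
    (hdeg : ∀ s ∈ S, T.Adj v' s → T.degree s = 1)
    (s_i s_j : V) (hsi : s_i ∈ S) (hsj : s_j ∈ S) (hij : s_i ≠ s_j)
    (htri₁ : G.Adj v' s_i) (htri₂ : G.Adj v' s_j) (htri₃ : G.Adj s_i s_j)
    (hTij : T.Adj s_i s_j) :
    ¬ T.Adj v' s_i ∧ ¬ T.Adj v' s_j :=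
  triangle_constraint_valid_general T v' S hv'S hdeg s_i s_j hsi hsj hTij
end
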